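/- Every connected (bull, C4)-free graph is either reducible, or basic, or has a terminal one-point cutset. -/

import Mathlib

open SimpleGraph

variable {V : Type*}

/-- The bull: a triangle 0,1,2 with pendant vertices 3 (adjacent to 0) and 4 (adjacent to 1). -/
def bullGraph : SimpleGraph (Fin 5) :=
  SimpleGraph.fromRel (fun i j =>
    (i = 0 ∧ j = 1) ∨ (i = 0 ∧ j = 2) ∨ (i = 1 ∧ j = 2) ∨ (i = 0 ∧ j = 3) ∨ (i = 1 ∧ j = 4))

/-- The graph consisting of two independent edges: 0-1 and 2-3. -/
def twoK2 : SimpleGraph (Fin 4) :=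
  SimpleGraph.fromRel (fun i j => (i = 0 ∧ j = 1) ∨ (i = 2 ∧ j = 3))

/-- `G` has no induced subgraph isomorphic to `H`. -/
def IndFree {W : Type*} (H : SimpleGraph W) (G : SimpleGraph V) : Prop :=
  IsEmpty (H ↪g G)

/-- A graph is chordal if it has no induced cycle of length at least 4. -/
def Chordal (G : SimpleGraph V) : Prop :=
  ∀ n : ℕ, 4 ≤ n → IndFree (cycleGraph n) G

/-- A cap on a hole of length `n`: a cycle on `ZMod n` together with an extra vertex
adjacent to exactly the two adjacent hole vertices `0` and `1`. -/
def capGraph (n : ℕ) : SimpleGraph (Option (ZMod n)) :=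
  SimpleGraph.fromRel (fun a b =>
    match a, b with
    | some i, some j => j = i + 1
    | none, some i => i = 0 ∨ i = 1
    | _, _ => False)

/-- `x` dominates `y`: they are adjacent and every neighbour of `y` other than `x`
is a neighbour of `x`. -/
def Dominates (G : SimpleGraph V) (x y : V) : Prop :=
  G.Adj x y ∧ ∀ z, G.Adj y z → z ≠ x → G.Adj x z

/-- A graph is reducible if some vertex dominates an adjacent vertex. -/
def Reducible (G : SimpleGraph V) : Prop :=
  ∃ x y, Dominates G x y

/-- Two adjacent vertices with the same neighbours other than each other. -/
def TrueTwins (G : SimpleGraph V) (x y : V) : Prop :=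
  G.Adj x y ∧ ∀ z, z ≠ x → z ≠ y → (G.Adj x z ↔ G.Adj y z)

/-- A vertex is simplicial if its neighbourhood induces a clique. -/
def Simplicial (G : SimpleGraph V) (v : V) : Prop :=
  G.IsClique (G.neighborSet v)

/-- A universal vertex is adjacent to all other vertices. -/
def Universal (G : SimpleGraph V) (v : V) : Prop :=
  ∀ w, w ≠ v → G.Adj v w

/-- A graph is biconnected if it is connected and remains connected after
deleting any single vertex. -/
def Biconnected (G : SimpleGraph V) : Prop :=
  G.Connected ∧ ∀ v : V, (G.induce ({v}ᶜ : Set V)).Connected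

/-- A basic (cap-free) graph: a chordal graph, or a biconnected triangle-free graph
together with at most one additional vertex adjacent to all other vertices. -/
def IsBasic (G : SimpleGraph V) : Prop :=
  Chordal G ∨ (Biconnected G ∧ G.CliqueFree 3) ∨
    (∃ v : V, Universal G v ∧ Biconnected (G.induce ({v}ᶜ : Set V)) ∧
      (G.induce ({v}ᶜ : Set V)).CliqueFree 3)

/-- A one-point cutset: a vertex whose removal disconnects the graph. -/
def IsCutVertex (G : SimpleGraph V) (v : V) : Prop :=
  ¬ (G.induce ({v}ᶜ : Set V)).Connected

/-- `C` is (the vertex set of) a connected component of `G - v`. -/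
def IsComponentOf (G : SimpleGraph V) (v : V) (C : Set V) : Prop :=
  v ∉ C ∧ C.Nonempty ∧ (G.induce C).Connected ∧
    ∀ x ∈ C, ∀ y, G.Adj x y → y ≠ v → y ∈ C

/-- An amalgam partition `(K, A1, B1, A2, B2)` of `G`. -/
structure IsAmalgamPartition (G : SimpleGraph V) (K A1 B1 A2 B2 : Set V) : Prop where
  partition : ∀ v : V, (v ∈ K ∧ v ∉ A1 ∧ v ∉ B1 ∧ v ∉ A2 ∧ v ∉ B2) ∨
    (v ∉ K ∧ v ∈ A1 ∧ v ∉ B1 ∧ v ∉ A2 ∧ v ∉ B2) ∨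
    (v ∉ K ∧ v ∉ A1 ∧ v ∈ B1 ∧ v ∉ A2 ∧ v ∉ B2) ∨
    (v ∉ K ∧ v ∉ A1 ∧ v ∉ B1 ∧ v ∈ A2 ∧ v ∉ B2) ∨
    (v ∉ K ∧ v ∉ A1 ∧ v ∉ B1 ∧ v ∉ A2 ∧ v ∈ B2)
  A1_nonempty : A1.Nonempty
  A2_nonempty : A2.Nonempty
  K_clique : G.IsClique K
  side1_big : 2 ≤ (A1 ∪ B1).ncard
  side2_big : 2 ≤ (A2 ∪ B2).ncard
  A1A2_complete : ∀ a1 ∈ A1, ∀ a2 ∈ A2, G.Adj a1 a2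
  KA1_complete : ∀ k ∈ K, ∀ a ∈ A1, G.Adj k a
  KA2_complete : ∀ k ∈ K, ∀ a ∈ A2, G.Adj k a
  B1_sep : ∀ b ∈ B1, ∀ x ∈ A2 ∪ B2, ¬ G.Adj b x
  B2_sep : ∀ b ∈ B2, ∀ x ∈ A1 ∪ B1, ¬ G.Adj b x

/-- A clique cover of `G`: a finite family of cliques covering all vertices. -/
def IsCliqueCover (G : SimpleGraph V) (𝒞 : Finset (Set V)) : Prop :=
  (∀ s ∈ 𝒞, G.IsClique s) ∧ ∀ v : V, ∃ s ∈ 𝒞, v ∈ s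

/-- The clique cover number `θ(G)`. -/
noncomputable def cliqueCoverNumber (G : SimpleGraph V) : ℕ :=
  sInf {n : ℕ | ∃ 𝒞 : Finset (Set V), IsCliqueCover G 𝒞 ∧ 𝒞.card = n}

/-- A matching of `G`: a finite set of edges, pairwise vertex-disjoint. -/
def IsMatching' (G : SimpleGraph V) (M : Finset (Sym2 V)) : Prop :=
  (↑M : Set (Sym2 V)) ⊆ G.edgeSet ∧
    ∀ e ∈ M, ∀ f ∈ M, e ≠ f → ∀ v : V, v ∈ e → v ∉ f

/-- The maximum size `m(G)` of a matching of `G`. -/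
noncomputable def matchingNumber (G : SimpleGraph V) : ℕ :=
  sSup {n : ℕ | ∃ M : Finset (Sym2 V), IsMatching' G M ∧ M.card = n}

/-- An asteroidal triple: a stable triple such that between any two of its vertices
there is a path avoiding the closed neighbourhood of the third. -/
def IsAT (G : SimpleGraph V) (x y z : V) : Prop :=
  x ≠ y ∧ y ≠ z ∧ x ≠ z ∧ ¬ G.Adj x y ∧ ¬ G.Adj y z ∧ ¬ G.Adj x z ∧
    (∃ p : G.Walk x y, ∀ w ∈ p.support, w ≠ z ∧ ¬ G.Adj z w) ∧
    (∃ p : G.Walk y z, ∀ w ∈ p.support, w ≠ x ∧ ¬ G.Adj x w) ∧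
    (∃ p : G.Walk x z, ∀ w ∈ p.support, w ≠ y ∧ ¬ G.Adj y w)

def ATFree (G : SimpleGraph V) : Prop := ¬ ∃ x y z : V, IsAT G x y z

/-!
In an irreducible graph every edge `xy` has a neighbour of `y` outside the closed neighbourhood
of `x`. Forbidding the bull and `C4`, such private neighbours turn a triangle with a pendant vertex
into an induced `C4`, and every triangle carries a pendant vertex; so an irreducible
(bull, C4)-free graph is triangle-free. A triangle-free graph on at least two vertices is basic
when it is biconnected. Otherwise pick a cut vertex `v` and a component `C` of `G - v` with `C`
minimal: `C ∪ {v}` is biconnected, since a vertex `w ∈ C` cutting it would leave a component of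
`G - w` strictly inside `C`.
-/

namespace IndFree

variable {G : SimpleGraph V}

lemma false_of_adj_iff {W : Type*} {H : SimpleGraph W} (hH : IndFree H G) (f : W → V)
    (hf : Function.Injective f) (hadj : ∀ i j, G.Adj (f i) (f j) ↔ H.Adj i j) : False :=
  hH.false ⟨⟨f, hf⟩, hadj _ _⟩

lemma chord_of_cycle_four (hc : IndFree (cycleGraph 4) G) {a b c d : V}
    (hab : G.Adj a b) (hbc : G.Adj b c) (hcd : G.Adj c d) (hda : G.Adj d a)
    (hac : a ≠ c) (hbd : b ≠ d) : G.Adj a c ∨ G.Adj b d := by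
  by_contra! ⟨hac', hbd'⟩
  have := hab.ne; have := hbc.ne; have := hcd.ne; have := hda.ne
  refine hc.false_of_adj_iff ![a, b, c, d] ?_ ?_
  · intro i j hij
    fin_cases i <;> fin_cases j <;> simp_all [eq_comm]
  · intro i j
    fin_cases i <;> fin_cases j <;> simp +decide [G.adj_comm, hda.symm, *]

lemma adj_of_bull (hb : IndFree bullGraph G) {x y z p q : V}
    (hxy : G.Adj x y) (hxz : G.Adj x z) (hyz : G.Adj y z) (hxp : G.Adj x p) (hyq : G.Adj y q)
    (hyp : ¬ G.Adj y p) (hzp : ¬ G.Adj z p) (hxq : ¬ G.Adj x q) (hzq : ¬ G.Adj z q) :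
    G.Adj p q := by
  by_contra hpq
  have := hxy.ne; have := hxz.ne; have := hyz.ne; have := hxp.ne; have := hyq.ne
  have : p ≠ y := by rintro rfl; exact hzp hyz.symm
  have : p ≠ z := by rintro rfl; exact hyp hyz
  have : q ≠ x := by rintro rfl; exact hzq hxz.symm
  have : q ≠ z := by rintro rfl; exact hxq hxz
  have : p ≠ q := by rintro rfl; exact hxq hxp
  refine hb.false_of_adj_iff ![x, y, z, p, q] ?_ ?_
  · intro i j hij
    fin_cases i <;> fin_cases j <;> simp_all [eq_comm]
  · intro i j
    fin_cases i <;> fin_cases j <;> simp +decide [bullGraph, G.adj_comm, *]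

end IndFree

section Reducibility

variable {G : SimpleGraph V}

lemma exists_adj_not_adj_of_not_reducible (hG : ¬ Reducible G) {a b : V} (hab : G.Adj a b) :
    ∃ c, G.Adj b c ∧ c ≠ a ∧ ¬ G.Adj a c := by
  by_contra! h
  exact hG ⟨a, b, hab, h⟩

variable (hb : IndFree bullGraph G) (hc : IndFree (cycleGraph 4) G)
include hb hc

lemma adj_of_triangle_pendant {x y z p q : V}
    (hxy : G.Adj x y) (hxz : G.Adj x z) (hyz : G.Adj y z)
    (hxp : G.Adj x p) (hyp : ¬ G.Adj y p) (hzp : ¬ G.Adj z p)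
    (hyq : G.Adj y q) (hxq : ¬ G.Adj x q) (hqx : q ≠ x) : G.Adj z q := by
  by_contra hzq
  have hpq := hb.adj_of_bull hxy hxz hyz hxp hyq hyp hzp hxq hzq
  have hpy : p ≠ y := by rintro rfl; exact hzp hyz.symm
  exact (hc.chord_of_cycle_four hxp.symm hxy hyq hpq.symm hpy hqx.symm).elim
    (fun h => hyp h.symm) hxq

lemma reducible_of_triangle_pendant {x y z p : V}
    (hxy : G.Adj x y) (hxz : G.Adj x z) (hyz : G.Adj y z)
    (hxp : G.Adj x p) (hyp : ¬ G.Adj y p) (hzp : ¬ G.Adj z p) : Reducible G := by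
  by_contra hG
  have pendant {q : V} : G.Adj y q → ¬ G.Adj x q → q ≠ x → G.Adj z q :=
    adj_of_triangle_pendant hb hc hxy hxz hyz hxp hyp hzp
  obtain ⟨q, hyq, hqx, hxq⟩ := exists_adj_not_adj_of_not_reducible hG hxy
  have hzq : G.Adj z q := pendant hyq hxq hqx
  obtain ⟨r, hyr, hrz, hzr⟩ := exists_adj_not_adj_of_not_reducible hG hyz.symm
  have hxr : G.Adj x r := by
    by_contra hxr
    exact hzr (pendant hyr hxr (by rintro rfl; exact hzr hxz.symm))
  obtain ⟨s, hqs, hsy, hys⟩ := exists_adj_not_adj_of_not_reducible hG hyq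
  by_cases hzs : G.Adj z s
  · have hxs : G.Adj x s := by
      by_contra hxs
      exact hys (adj_of_triangle_pendant hb hc hxz hxy hyz.symm hxp hzp hyp hzs hxs
        (by rintro rfl; exact hxq hqs.symm))
    exact (hc.chord_of_cycle_four hxs.symm hxy hyq hqs hsy hqx.symm).elim
      (fun h => hys h.symm) hxq
  · have hqr : G.Adj q r := by
      by_contra hqr
      exact hzr (adj_of_triangle_pendant hb hc hyq.symm hzq.symm hyz hqs hys hzs hyr hqr
        (by rintro rfl; exact hzr hzq))
    exact (hc.chord_of_cycle_four hqr.symm hzq.symm hxz.symm hxr hrz hqx).elim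
      (fun h => hzr h.symm) (fun h => hxq h.symm)

lemma reducible_of_triangle {x y z : V} (hxy : G.Adj x y) (hxz : G.Adj x z) (hyz : G.Adj y z) :
    Reducible G := by
  by_contra hG
  obtain ⟨p, hxp, hpy, hyp⟩ := exists_adj_not_adj_of_not_reducible hG hxy.symm
  have hzp : G.Adj z p := by
    by_contra hzp
    exact hG (reducible_of_triangle_pendant hb hc hxy hxz hyz hxp hyp hzp)
  obtain ⟨r, hxr, hrz, hzr⟩ := exists_adj_not_adj_of_not_reducible hG hxz.symm
  have hyr : G.Adj y r := by
    by_contra hyr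
    exact hG (reducible_of_triangle_pendant hb hc hxz hxy hyz.symm hxr hzr hyr)
  have hpr : ¬ G.Adj p r := fun hpr =>
    (hc.chord_of_cycle_four hzp.symm hyz.symm hyr hpr.symm hpy hrz.symm).elim
      (fun h => hyp h.symm) hzr
  exact hG (reducible_of_triangle_pendant hb hc hxp hxz hzp.symm hxr hpr hzr)

lemma reducible_of_not_cliqueFree_three (htri : ¬ G.CliqueFree 3) : Reducible G := by
  classical
  obtain ⟨t, ht⟩ := not_forall_not.1 htri
  obtain ⟨x, y, z, hxy, hxz, hyz, -⟩ := is3Clique_iff.1 ht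
  exact reducible_of_triangle hb hc hxy hxz hyz

end Reducibility

section Components

variable {G : SimpleGraph V}

lemma connected_induce_of_forall_walk {S : Set V} {r : V} (hr : r ∈ S)
    (h : ∀ x ∈ S, ∃ p : G.Walk x r, ∀ z ∈ p.support, z ∈ S) : (G.induce S).Connected :=
  induce_connected_of_patches r hr fun hx => by
    obtain ⟨p, hp⟩ := h _ hx
    exact ⟨_, hp, p.end_mem_support, p.start_mem_support,
      (p.connected_induce_support.preconnected _ _).symm⟩

lemma SimpleGraph.Connected.exists_walk_of_induce {S : Set V} (h : (G.induce S).Connected)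
    {x y : V} (hx : x ∈ S) (hy : y ∈ S) : ∃ p : G.Walk x y, ∀ z ∈ p.support, z ∈ S := by
  obtain ⟨p⟩ := h.preconnected ⟨x, hx⟩ ⟨y, hy⟩
  have hsupp : ∀ z ∈ (p.map (Embedding.induce S).toHom).support, z ∈ S := by
    rw [Walk.support_map, List.forall_mem_map]
    exact fun z _ => z.2
  exact ⟨_, hsupp⟩

lemma connected_induce_induce_compl_singleton_iff {S : Set V} (w : S) :
    ((G.induce S).induce {w}ᶜ).Connected ↔ (G.induce (S \ {w.1})).Connected := by
  let e : (G.induce S).induce {w}ᶜ ≃g G.induce (Subtype.val '' {w}ᶜ) :=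
    { Equiv.Set.image _ _ Subtype.val_injective with map_rel_iff' := Iff.rfl }
  rw [e.connected_iff, Set.image_val_compl, Set.image_singleton]

def componentAvoiding (G : SimpleGraph V) (w u : V) : Set V :=
  {y | ∃ p : G.Walk u y, w ∉ p.support}

lemma isComponentOf_componentAvoiding {w u : V} (hu : u ≠ w) :
    IsComponentOf G w (componentAvoiding G w u) := by
  classical
  refine ⟨fun ⟨p, hp⟩ => hp p.end_mem_support, ⟨u, .nil, by simpa using hu.symm⟩, ?_, ?_⟩
  · refine connected_induce_of_forall_walk ⟨.nil, by simpa using hu.symm⟩ fun y ⟨p, hp⟩ =>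
      ⟨p.reverse, fun z hz => ?_⟩
    rw [Walk.support_reverse, List.mem_reverse] at hz
    exact ⟨p.takeUntil z hz, fun hw => hp (p.support_takeUntil_subset_support hz hw)⟩
  · rintro y ⟨p, hp⟩ z hyz hzw
    refine ⟨p.concat hyz, ?_⟩
    simp [Walk.support_concat, hp, hzw.symm]

namespace IsComponentOf

variable {v : V} {C : Set V} (hC : IsComponentOf G v C)
include hC

lemma support_subset {x y : V} (p : G.Walk x y) (hx : x ∈ C) (hv : v ∉ p.support) :
    ∀ z ∈ p.support, z ∈ C := by
  induction p with
  | nil => simpa using hx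
  | cons h p ih =>
    simp only [Walk.support_cons, List.mem_cons, not_or] at hv ⊢
    rintro z (rfl | hz)
    · exact hx
    · exact ih (hC.2.2.2 _ hx _ h fun h' => hv.2 (h' ▸ p.start_mem_support)) hv.2 z hz

lemma exists_walk_to_apex {x : V} (p : G.Walk x v) (hx : x ∈ insert v C) :
    ∃ q : G.Walk x v, ∀ z ∈ q.support, z ∈ insert v C ∧ z ∈ p.support := by
  induction p with
  | nil => exact ⟨.nil, by simp⟩
  | @cons x y v h p ih =>
    by_cases hxv : x = v
    · subst hxv
      exact ⟨.nil, by simp⟩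
    have hy : y ∈ insert v C := by
      by_cases hyv : y = v
      · exact hyv ▸ Set.mem_insert y C
      · exact Set.mem_insert_of_mem v (hC.2.2.2 x (hx.resolve_left hxv) y h hyv)
    obtain ⟨q, hq⟩ := ih hC hy
    refine ⟨.cons h q, ?_⟩
    simp only [Walk.support_cons, List.mem_cons, forall_eq_or_imp, true_or, and_true]
    exact ⟨hx, fun z hz => ⟨(hq z hz).1, Or.inr (hq z hz).2⟩⟩

lemma connected_induce_insert (hconn : G.Connected) : (G.induce (insert v C)).Connected :=
  connected_induce_of_forall_walk (Set.mem_insert v C) fun x hx =>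
    let ⟨q, hq⟩ := hC.exists_walk_to_apex (hconn.preconnected x v).some hx
    ⟨q, fun z hz => (hq z hz).1⟩

lemma biconnected_or_exists_ssubset (hconn : G.Connected) :
    Biconnected (G.induce (insert v C)) ∨
      ∃ w D, IsCutVertex G w ∧ IsComponentOf G w D ∧ D ⊂ C := by
  classical
  refine or_iff_not_imp_right.2 fun hmin => ⟨hC.connected_induce_insert hconn, fun ⟨w, hw⟩ => ?_⟩
  rw [connected_induce_induce_compl_singleton_iff]
  dsimp only
  rcases hw with rfl | hwC
  · rw [Set.insert_sdiff_self_of_notMem hC.1]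
    exact hC.2.2.1
  have hvw : v ≠ w := fun h => hC.1 (h ▸ hwC)
  refine connected_induce_of_forall_walk ⟨Set.mem_insert v C, hvw⟩ fun x hx => ?_
  by_contra hnx
  have hxC : x ∈ C := hx.1.resolve_left (by rintro rfl; exact hnx ⟨.nil, by simpa using hx⟩)
  have hxw : x ≠ w := hx.2
  set D := componentAvoiding G w x
  have hD : IsComponentOf G w D := isComponentOf_componentAvoiding hxw
  have hvD : v ∉ D := fun ⟨p, hp⟩ => by
    obtain ⟨q, hq⟩ := hC.exists_walk_to_apex p (Or.inr hxC)
    exact hnx ⟨q, fun z hz =>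
      ⟨(hq z hz).1, fun hzw => hp (Set.mem_singleton_iff.1 hzw ▸ (hq z hz).2)⟩⟩
  have hDC : D ⊆ C := fun y ⟨p, hp⟩ =>
    hC.support_subset p hxC (fun hv => hvD ⟨p.takeUntil v hv,
      fun hw => hp (p.support_takeUntil_subset_support hv hw)⟩) y p.end_mem_support
  have hcut : IsCutVertex G w := fun hcon => by
    obtain ⟨p, hp⟩ := hcon.exists_walk_of_induce hxw hvw
    exact hvD ⟨p, fun hw => hp w hw rfl⟩
  exact hmin ⟨w, D, hcut, hD, (Set.ssubset_iff_of_subset hDC).2 ⟨w, hwC, hD.1⟩⟩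

lemma exists_biconnected [Finite V] (hconn : G.Connected) (hcut : IsCutVertex G v) :
    ∃ w D, IsCutVertex G w ∧ IsComponentOf G w D ∧ Biconnected (G.induce (insert w D)) := by
  induction C using WellFoundedLT.induction generalizing v with
  | _ C ih =>
    rcases hC.biconnected_or_exists_ssubset hconn with hbi | ⟨w, D, hw, hD, hDC⟩
    · exact ⟨v, C, hcut, hC, hbi⟩
    · exact ih D hDC hD hw

end IsComponentOf

end Components

lemma chordal_of_subsingleton [Subsingleton V] (G : SimpleGraph V) : Chordal G := fun n hn =>
  ⟨fun f => by
    have := Fin.subsingleton_iff_le_one.1 f.injective.subsingleton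
    omega⟩

lemma exists_isCutVertex_biconnected_component [Finite V] [Nontrivial V] {G : SimpleGraph V}
    (hconn : G.Connected) (hG : ¬ Biconnected G) :
    ∃ v C, IsCutVertex G v ∧ IsComponentOf G v C ∧ Biconnected (G.induce (insert v C)) := by
  obtain ⟨w, hw⟩ : ∃ w, IsCutVertex G w := by simpa [Biconnected, hconn, IsCutVertex] using hG
  obtain ⟨u, hu⟩ := exists_ne w
  exact (isComponentOf_componentAvoiding hu).exists_biconnected hconn hw

/-- every connected (bull, C4)-free graph is reducible, or basic, or has a
terminal one-point cutset. -/
theorem stmt10 [Fintype V] (G : SimpleGraph V) (hconn : G.Connected)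
    (hb : IndFree bullGraph G) (hc : IndFree (SimpleGraph.cycleGraph 4) G) :
    Reducible G ∨ IsBasic G ∨
      ∃ v : V, IsCutVertex G v ∧ ∃ C : Set V, IsComponentOf G v C ∧
        (G.induce (insert v C)).CliqueFree 3 ∧ IsBasic (G.induce (insert v C)) := by
  by_cases htri : G.CliqueFree 3
  swap
  · exact Or.inl (reducible_of_not_cliqueFree_three hb hc htri)
  rcases subsingleton_or_nontrivial V with _ | _
  · exact Or.inr (Or.inl (Or.inl (chordal_of_subsingleton G)))
  by_cases hbi : Biconnected G
  · exact Or.inr (Or.inl (Or.inr (Or.inl ⟨hbi, htri⟩)))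
  obtain ⟨v, C, hcut, hC, hCbi⟩ := exists_isCutVertex_biconnected_component hconn hbi
  have hCtri : (G.induce (insert v C)).CliqueFree 3 := htri.comap ⟨Copy.induce G _⟩
  exact Or.inr (Or.inr ⟨v, hcut, C, hC, hCtri, Or.inr (Or.inl ⟨hCbi, hCtri⟩)⟩)
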